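/- The order complex of a strongly constructible poset is a constructible simplicial complex. -/

import Mathlib

open scoped BigOperators

/-- A (finite, abstract) simplicial complex on vertex set `V`:
a collection of finite subsets of `V` closed under taking subsets. -/
structure SC (V : Type*) where
  faces : Set (Finset V)
  down : ∀ ⦃s t : Finset V⦄, s ∈ faces → t ⊆ s → t ∈ faces

namespace SC

variable {V : Type*}

/-- The union of two simplicial complexes. -/
def union (Δ₁ Δ₂ : SC V) : SC V :=
  ⟨Δ₁.faces ∪ Δ₂.faces, by
    rintro s t (h | h) hts
    · exact Or.inl (Δ₁.down h hts)
    · exact Or.inr (Δ₂.down h hts)⟩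

/-- The intersection of two simplicial complexes. -/
def inter (Δ₁ Δ₂ : SC V) : SC V :=
  ⟨Δ₁.faces ∩ Δ₂.faces, fun _ _ h hts => ⟨Δ₁.down h.1 hts, Δ₂.down h.2 hts⟩⟩

/-- The simplex on a finite vertex set `s`: all subsets of `s`. -/
def simplex (s : Finset V) : SC V :=
  ⟨{t | t ⊆ s}, fun _ _ h h' => h'.trans h⟩

/-- The link of a face `F`: `{G \ F : G ∈ Δ, F ⊆ G}`. -/
def link [DecidableEq V] (Δ : SC V) (F : Finset V) : SC V :=
  ⟨{G | Disjoint G F ∧ G ∪ F ∈ Δ.faces}, by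
    rintro s t ⟨hd, hm⟩ hts
    exact ⟨hd.mono_left hts, Δ.down hm (Finset.union_subset_union hts le_rfl)⟩⟩

/-- The dimension of a simplicial complex, as an integer
(the complex `{∅}` has dimension `-1`). -/
noncomputable def dim (Δ : SC V) : ℤ :=
  sSup ((fun s : Finset V => (s.card : ℤ) - 1) '' Δ.faces)

/-- The geometric realization of a simplicial complex on a finite vertex set,
as a subspace of `V → ℝ`. -/
def realization [Fintype V] (Δ : SC V) : Set (V → ℝ) :=
  {f | (∀ v, 0 ≤ f v) ∧ (∑ v, f v) = 1 ∧ ∃ s ∈ Δ.faces, ∀ v, f v ≠ 0 → v ∈ s}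

end SC

/-- Constructibility (generalized): a `d`-dimensional complex is constructible
if it is a simplex, or the union of two `d`-dimensional constructible complexes
whose intersection is constructible of dimension at least `d - 1`. -/
inductive Constructible {V : Type*} : SC V → ℤ → Prop
  | simplex (s : Finset V) : Constructible (SC.simplex s) ((s.card : ℤ) - 1)
  | union {Δ₁ Δ₂ : SC V} {d e : ℤ} : Constructible Δ₁ d → Constructible Δ₂ d →
      d - 1 ≤ e → Constructible (SC.inter Δ₁ Δ₂) e →
      Constructible (SC.union Δ₁ Δ₂) d

/-- A topological space is `k`-connected if it is nonempty (for `k ≥ -1`) and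
all its homotopy groups `π_i` vanish for `0 ≤ i ≤ k`, at every basepoint. -/
def KConnected (k : ℤ) (X : Type*) [TopologicalSpace X] : Prop :=
  (-1 ≤ k → Nonempty X) ∧
    ∀ (x : X) (i : ℕ), (i : ℤ) ≤ k → Subsingleton (HomotopyGroup (Fin i) X x)

namespace SC

/-- The order complex of a poset `P`: the simplicial complex whose faces are
the finite chains of `P`. -/
def orderComplex (P : Type*) [PartialOrder P] : SC P :=
  ⟨{s | ∀ a ∈ s, ∀ b ∈ s, a ≤ b ∨ b ≤ a},
    fun s t hs hts a ha b hb => hs a (hts ha) b (hts hb)⟩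

end SC

/-- A simplicial complex is pure shellable of dimension `d` if its facets all
have dimension `d` and can be listed as `G₁, …, G_m` so that for `i > 1` the
intersection of `G₁ ∪ ⋯ ∪ G_{i-1}` with `G_i` is pure of dimension `d - 1`. -/
def PureShellable {V : Type*} (Δ : SC V) (d : ℕ) : Prop :=
  ∃ (m : ℕ) (G : Fin m → Finset V), 0 < m ∧
    (∀ i, G i ∈ Δ.faces ∧ (G i).card = d + 1) ∧
    (∀ s ∈ Δ.faces, ∃ i, s ⊆ G i) ∧
    ∀ i : Fin m, 0 < (i : ℕ) →
      ∀ s ⊆ G i, (∃ j, j < i ∧ s ⊆ G j) →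
        ∃ t, t ⊆ G i ∧ (∃ j, j < i ∧ t ⊆ G j) ∧ t.card = d ∧ s ⊆ t

/-- A poset has rank `d` if its longest chains have `d + 1` elements. -/
def HasRank (P : Type*) [Preorder P] (d : ℕ) : Prop :=
  (∃ l : List P, l.Chain' (· < ·) ∧ l.length = d + 1) ∧
    ∀ l : List P, l.Chain' (· < ·) → l.length ≤ d + 1

/-- Strong constructibility: a finite poset `P` of rank `d` with a minimum
element is strongly constructible if it is bounded and pure shellable, or it is
the union of two strongly constructible proper order ideals of rank `d` whose
intersection is strongly constructible of rank at least `d - 1`. -/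
inductive SConstr : ∀ (P : Type) [PartialOrder P], ℕ → Prop
  | base (P : Type) [PartialOrder P] [Finite P] (d : ℕ)
      (hbot : ∃ m : P, ∀ x, m ≤ x) (htop : ∃ M : P, ∀ x, x ≤ M)
      (hshell : PureShellable (SC.orderComplex P) d) : SConstr P d
  | union (P : Type) [PartialOrder P] [Finite P] (d e : ℕ) (I₁ I₂ : Set P)
      (hmin : ∃ m : P, ∀ x, m ≤ x) (hrank : HasRank P d)
      (hl1 : IsLowerSet I₁) (hl2 : IsLowerSet I₂)
      (hp1 : I₁ ≠ Set.univ) (hp2 : I₂ ≠ Set.univ)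
      (hcover : I₁ ∪ I₂ = Set.univ)
      (hr1 : HasRank I₁ d) (hr2 : HasRank I₂ d)
      (hc1 : SConstr I₁ d) (hc2 : SConstr I₂ d)
      (he : d - 1 ≤ e)
      (hre : HasRank ↥(I₁ ∩ I₂) e) (hce : SConstr ↥(I₁ ∩ I₂) e) :
      SConstr P d

/-!
A shelling builds the complex one facet at a time, each new simplex meeting the earlier ones in
the complex generated by some of its codimension-one faces. A nonempty family of codimension-one
faces of a simplex generates a constructible complex: it is the union of the complex of all but one
face `t` with the simplex on `t`, and these meet in the complex generated by the faces `u ∩ t`,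
a family of the same kind one dimension lower. So pure shellable complexes are constructible.

In the recursive clause, the greatest element of a chain of `P` lies in `I₁` or in `I₂`, and then
so does the whole chain since these are order ideals. Hence `Δ(P) = Δ(I₁) ∪ Δ(I₂)` with
`Δ(I₁) ∩ Δ(I₂) = Δ(I₁ ∩ I₂)`, which is exactly the gluing allowed for constructible complexes.
-/

namespace SC

variable {V W : Type*}

@[ext]
theorem ext {Δ₁ Δ₂ : SC V} (h : Δ₁.faces = Δ₂.faces) : Δ₁ = Δ₂ := by
  cases Δ₁; cases Δ₂; simp_all

def generatedBy (𝓕 : Finset (Finset V)) : SC V :=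
  ⟨{s | ∃ u ∈ 𝓕, s ⊆ u}, fun _ _ ⟨u, hu, hsu⟩ hts => ⟨u, hu, hts.trans hsu⟩⟩

@[simp]
theorem mem_generatedBy {𝓕 : Finset (Finset V)} {s : Finset V} :
    s ∈ (generatedBy 𝓕).faces ↔ ∃ u ∈ 𝓕, s ⊆ u :=
  Iff.rfl

theorem generatedBy_singleton (t : Finset V) : generatedBy {t} = simplex t := by
  ext s; simp [simplex]

theorem generatedBy_insert [DecidableEq V] (t : Finset V) (𝓕 : Finset (Finset V)) :
    generatedBy (insert t 𝓕) = union (generatedBy 𝓕) (simplex t) := by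
  ext s; simp [union, simplex, or_comm]

theorem inter_simplex_generatedBy [DecidableEq V] (𝓕 : Finset (Finset V)) (t : Finset V) :
    inter (generatedBy 𝓕) (simplex t) = generatedBy (𝓕.image (· ∩ t)) := by
  ext s; simp only [inter, simplex, Set.mem_inter_iff, mem_generatedBy, Set.mem_ofPred_eq,
    Finset.mem_image, exists_exists_and_eq_and, Finset.subset_inter_iff]
  exact ⟨fun ⟨⟨u, hu, hsu⟩, hst⟩ => ⟨u, hu, hsu, hst⟩, fun ⟨u, hu, hsu, hst⟩ => ⟨⟨u, hu, hsu⟩, hst⟩⟩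

def map (f : V ↪ W) (Δ : SC V) : SC W :=
  ⟨Finset.map f '' Δ.faces, by
    rintro _ s ⟨u, hu, rfl⟩ hsu
    obtain ⟨t, htu, rfl⟩ := Finset.subset_map_iff.mp hsu
    exact ⟨t, Δ.down hu htu, rfl⟩⟩

theorem map_simplex (f : V ↪ W) (s : Finset V) : (simplex s).map f = simplex (s.map f) := by
  ext x
  simp only [map, simplex, Set.mem_image, Set.mem_ofPred_eq, Finset.subset_map_iff]
  exact ⟨fun ⟨t, hts, hx⟩ => ⟨t, hts, hx.symm⟩, fun ⟨t, hts, hx⟩ => ⟨t, hts, hx.symm⟩⟩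

theorem map_union (f : V ↪ W) (Δ₁ Δ₂ : SC V) : (union Δ₁ Δ₂).map f = union (Δ₁.map f) (Δ₂.map f) :=
  ext (Set.image_union _ _ _)

theorem map_inter (f : V ↪ W) (Δ₁ Δ₂ : SC V) : (inter Δ₁ Δ₂).map f = inter (Δ₁.map f) (Δ₂.map f) :=
  ext (Set.image_inter (Finset.map_injective f))

end SC

theorem Finset.card_inter_add_one_eq_of_card_le {α : Type*} [DecidableEq α] {G s t : Finset α}
    {c : ℕ} (hG : G.card ≤ c + 1) (hs : s ⊆ G) (ht : t ⊆ G) (hsc : s.card = c)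
    (htc : t.card = c) (hst : s ≠ t) : (s ∩ t).card + 1 = c := by
  have hts : s ∩ t ≠ t := fun h =>
    hst (Finset.eq_of_subset_of_card_le (Finset.inter_eq_right.mp h) (by omega)).symm
  have hlt :=
    Finset.card_lt_card (Finset.ssubset_iff_subset_ne.mpr ⟨Finset.inter_subset_right, hts⟩)
  have hunion := Finset.card_union_add_card_inter s t
  have hle := Finset.card_le_card (Finset.union_subset hs ht)
  omega

namespace Constructible

variable {V W : Type*}

theorem simplex_of_card {s : Finset V} {d : ℤ} (h : (s.card : ℤ) = d + 1) :
    Constructible (SC.simplex s) d := by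
  simpa [h] using Constructible.simplex s

theorem map (f : V ↪ W) {Δ : SC V} {d : ℤ} (h : Constructible Δ d) :
    Constructible (Δ.map f) d := by
  induction h with
  | simplex s => rw [SC.map_simplex]; exact simplex_of_card (by simp)
  | union _ _ hde _ ih₁ ih₂ ihi =>
    rw [SC.map_union]
    exact union ih₁ ih₂ hde (SC.map_inter .. ▸ ihi)

theorem generatedBy_of_card {c : ℕ} {G : Finset V}
    {𝓕 : Finset (Finset V)} (hG : G.card ≤ c + 1) (h𝓕 : ∀ u ∈ 𝓕, u ⊆ G ∧ u.card = c)
    (hne : 𝓕.Nonempty) : Constructible (SC.generatedBy 𝓕) ((c : ℤ) - 1) := by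
  classical
  induction c using Nat.strong_induction_on generalizing G 𝓕 with
  | _ c IH =>
  induction hne using Finset.Nonempty.cons_induction with
  | singleton t =>
    rw [SC.generatedBy_singleton]
    exact simplex_of_card (by simp [(h𝓕 t (by simp)).2])
  | cons t 𝓕 ht h𝓕ne ih =>
    have htG := h𝓕 t (by simp)
    have h𝓕G : ∀ u ∈ 𝓕, u ⊆ G ∧ u.card = c := fun u hu => h𝓕 u (by simp [hu])
    have hcard : ∀ u ∈ 𝓕, (u ∩ t).card + 1 = c := fun u hu =>
      Finset.card_inter_add_one_eq_of_card_le hG (h𝓕G u hu).1 htG.1 (h𝓕G u hu).2 htG.2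
        (by rintro rfl; exact ht hu)
    have ⟨u₀, hu₀⟩ := h𝓕ne
    have hinter :
        Constructible (SC.inter (SC.generatedBy 𝓕) (SC.simplex t)) (((c - 1 : ℕ) : ℤ) - 1) := by
      rw [SC.inter_simplex_generatedBy]
      refine IH (c - 1) (by have := hcard u₀ hu₀; omega) (G := t) (by omega) ?_ (h𝓕ne.image _)
      simp only [Finset.mem_image]
      rintro _ ⟨u, hu, rfl⟩
      exact ⟨Finset.inter_subset_right, by have := hcard u hu; omega⟩
    rw [Finset.cons_eq_insert, SC.generatedBy_insert]
    exact union (ih h𝓕G) (simplex_of_card (by simp [htG.2])) (by have := hcard u₀ hu₀; omega)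
      hinter

theorem generatedBy_insert_of_shelling [DecidableEq V] {d : ℕ}
    {𝓕 : Finset (Finset V)} {t : Finset V} (h𝓕 : Constructible (SC.generatedBy 𝓕) d)
    (hne : 𝓕.Nonempty) (ht : t.card = d + 1)
    (hshell : ∀ s ⊆ t, (∃ u ∈ 𝓕, s ⊆ u) → ∃ r ⊆ t, (∃ u ∈ 𝓕, r ⊆ u) ∧ r.card = d ∧ s ⊆ r) :
    Constructible (SC.generatedBy (insert t 𝓕)) d := by
  set 𝓡 := t.powerset.filter fun r => r.card = d ∧ ∃ u ∈ 𝓕, r ⊆ u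
  have hinter : SC.inter (SC.generatedBy 𝓕) (SC.simplex t) = SC.generatedBy 𝓡 := by
    ext s
    simp only [SC.inter, SC.simplex, Set.mem_inter_iff, SC.mem_generatedBy, Set.mem_ofPred_eq, 𝓡,
      Finset.mem_filter, Finset.mem_powerset]
    constructor
    · rintro ⟨hprev, hst⟩
      obtain ⟨r, hrt, hr𝓕, hrd, hsr⟩ := hshell s hst hprev
      exact ⟨r, ⟨hrt, hrd, hr𝓕⟩, hsr⟩
    · rintro ⟨r, ⟨hrt, -, u, hu, hru⟩, hsr⟩
      exact ⟨⟨u, hu, hsr.trans hru⟩, hsr.trans hrt⟩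
  have h𝓡ne : 𝓡.Nonempty := by
    obtain ⟨r, hrt, hr𝓕, hrd, -⟩ :=
      hshell ∅ t.empty_subset (hne.imp fun u hu => ⟨hu, u.empty_subset⟩)
    exact ⟨r, by simp [𝓡, hrt, hrd, hr𝓕]⟩
  rw [SC.generatedBy_insert]
  refine union h𝓕 (simplex_of_card (by simp [ht])) le_rfl ?_
  rw [hinter]
  exact generatedBy_of_card ht.le (fun r hr => by simp_all [𝓡]) h𝓡ne

end Constructible

section InitialImage

variable {V : Type*} [DecidableEq V] {m : ℕ} (G : Fin m → Finset V)

def initialImage (k : ℕ) : Finset (Finset V) :=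
  (Finset.univ.filter fun i : Fin m => (i : ℕ) < k).image G

variable {G}

theorem mem_initialImage {k : ℕ} {u : Finset V} :
    u ∈ initialImage G k ↔ ∃ i : Fin m, (i : ℕ) < k ∧ G i = u := by
  simp [initialImage]

theorem initialImage_one (hm : 0 < m) : initialImage G 1 = {G ⟨0, hm⟩} := by
  ext u
  rw [mem_initialImage, Finset.mem_singleton]
  constructor
  · rintro ⟨i, hi, rfl⟩
    exact congrArg G (Fin.ext (Nat.lt_one_iff.mp hi))
  · rintro rfl
    exact ⟨_, Nat.one_pos, rfl⟩

theorem initialImage_succ {k : ℕ} (hk : k < m) :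
    initialImage G (k + 1) = insert (G ⟨k, hk⟩) (initialImage G k) := by
  ext u
  rw [Finset.mem_insert, mem_initialImage, mem_initialImage]
  constructor
  · rintro ⟨i, hi, rfl⟩
    rcases Nat.lt_succ_iff_lt_or_eq.mp hi with hi | hi
    · exact Or.inr ⟨i, hi, rfl⟩
    · exact Or.inl (congrArg G (Fin.ext hi))
  · rintro (rfl | ⟨i, hi, rfl⟩)
    · exact ⟨_, k.lt_succ_self, rfl⟩
    · exact ⟨i, by omega, rfl⟩

end InitialImage

theorem PureShellable.constructible {V : Type*} {Δ : SC V} {d : ℕ} (h : PureShellable Δ d) :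
    Constructible Δ d := by
  classical
  obtain ⟨m, G, hm, hfacet, hcover, hshell⟩ := h
  have hprefix : ∀ k, 1 ≤ k → k ≤ m → Constructible (SC.generatedBy (initialImage G k)) d := by
    intro k hk
    induction k, hk using Nat.le_induction with
    | base =>
      intro _
      rw [initialImage_one hm, SC.generatedBy_singleton]
      exact .simplex_of_card (by simp [(hfacet _).2])
    | succ k hk ih =>
      intro hkm
      rw [initialImage_succ hkm]
      refine .generatedBy_insert_of_shelling (ih (by omega))
        ⟨G ⟨0, hm⟩, mem_initialImage.mpr ⟨⟨0, hm⟩, hk, rfl⟩⟩ (hfacet _).2 fun s hs hprev => ?_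
      simp only [mem_initialImage, exists_exists_and_eq_and] at hprev ⊢
      exact hshell ⟨k, hkm⟩ hk s hs hprev
  have hΔ : Δ = SC.generatedBy (initialImage G m) := by
    ext s
    rw [SC.mem_generatedBy]
    constructor
    · intro hs
      obtain ⟨i, hsi⟩ := hcover s hs
      exact ⟨G i, mem_initialImage.mpr ⟨i, i.is_lt, rfl⟩, hsi⟩
    · rintro ⟨u, hu, hsu⟩
      obtain ⟨i, -, rfl⟩ := mem_initialImage.mp hu
      exact Δ.down (hfacet i).1 hsu
  exact hΔ ▸ hprefix m hm le_rfl

namespace SC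

variable {P : Type*} [PartialOrder P]

def orderComplexOn (I : Set P) : SC P :=
  (orderComplex I).map (Function.Embedding.subtype (· ∈ I))

theorem mem_orderComplexOn {I : Set P} {x : Finset P} :
    x ∈ (orderComplexOn I).faces ↔ x ∈ (orderComplex P).faces ∧ ↑x ⊆ I := by
  classical
  constructor
  · rintro ⟨t, ht, rfl⟩
    refine ⟨?_, fun a ha => ?_⟩
    · simp only [orderComplex, Set.mem_ofPred_eq, Finset.mem_map, Function.Embedding.coe_subtype]
      rintro _ ⟨a, ha, rfl⟩ _ ⟨b, hb, rfl⟩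
      exact ht a ha b hb
    · obtain ⟨a, -, rfl⟩ := Finset.mem_map.mp ha
      exact a.2
  · rintro ⟨hx, hxI⟩
    refine ⟨x.subtype (· ∈ I), fun a ha b hb => ?_, ?_⟩
    · rw [Finset.mem_subtype] at ha hb
      exact hx a ha b hb
    · rw [Finset.subtype_map, Finset.filter_true_of_mem fun a ha => hxI ha]

theorem inter_orderComplexOn (I₁ I₂ : Set P) :
    inter (orderComplexOn I₁) (orderComplexOn I₂) = orderComplexOn (I₁ ∩ I₂) := by
  ext x
  simp only [inter, Set.mem_inter_iff, mem_orderComplexOn, Set.subset_inter_iff]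
  tauto

theorem exists_isGreatest_of_mem_orderComplex {x : Finset P} (hx : x ∈ (orderComplex P).faces)
    (hne : x.Nonempty) : ∃ a, IsGreatest (x : Set P) a := by
  obtain ⟨a, ha⟩ := x.exists_maximal hne
  exact ⟨a, ha.prop, fun b hb => (hx a ha.prop b hb).elim (ha.le_of_ge hb) id⟩

theorem orderComplex_eq_union_orderComplexOn {I₁ I₂ : Set P} (h₁ : IsLowerSet I₁)
    (h₂ : IsLowerSet I₂) (hcover : I₁ ∪ I₂ = Set.univ) :
    orderComplex P = union (orderComplexOn I₁) (orderComplexOn I₂) := by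
  ext x
  simp only [union, Set.mem_union, mem_orderComplexOn, ← and_or_left, iff_self_and]
  intro hx
  obtain rfl | hne := x.eq_empty_or_nonempty
  · simp
  obtain ⟨a, -, ha⟩ := exists_isGreatest_of_mem_orderComplex hx hne
  have haI : a ∈ I₁ ∪ I₂ := hcover ▸ Set.mem_univ a
  exact haI.imp (fun haI b hb => h₁ (ha hb) haI) (fun haI b hb => h₂ (ha hb) haI)

end SC

theorem orderComplex_constructible_general (P : Type) [PartialOrder P]
    (d : ℕ) (h : SConstr P d) : Constructible (SC.orderComplex P) (d : ℤ) := by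
  induction h with
  | base _ _ _ _ hshell => exact hshell.constructible
  | union _ _ e I₁ I₂ _ _ hl₁ hl₂ _ _ hcover _ _ _ _ he _ _ ih₁ ih₂ ihe =>
    rw [SC.orderComplex_eq_union_orderComplexOn hl₁ hl₂ hcover]
    refine .union (e := e) (ih₁.map _) (ih₂.map _) (by omega) ?_
    rw [SC.inter_orderComplexOn]
    exact ihe.map _

/-- The order complex of a strongly constructible poset is a constructible
simplicial complex. -/
theorem orderComplex_constructible (P : Type) [PartialOrder P] [Finite P]
    (d : ℕ) (h : SConstr P d) : Constructible (SC.orderComplex P) (d : ℤ) :=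
  orderComplex_constructible_general P d h
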